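/- Let s ≥ 1 be an odd integer, let γ be a real number with |π|^{1/(q^s+q^{s-1})} < γ < |π|^{1/(q^{s+2}+q^{s+1})}, and let u_0 ∈ ℂ_p with |u_0| = γ. Then for every u ∈ ℂ_p with |u − u_0| < (|π|·γ^{-2})^{1/(q-1)} one has φ_0(u) ≠ 0, φ_0(u_0) ≠ 0, and |φ_1(u)/φ_0(u) − φ_1(u_0)/φ_0(u_0)| = |π|^{s+1}·γ^{-2(1+q+⋯+q^s)}·|u − u_0|. -/

import Mathlib

/-!
Besides the defining recursion, the coefficients satisfy the fixed-argument recursion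
`π m_{n+2}(u) = u^{q^{n+1}} m_{n+1}(u) + m_n(u)`. It gives
`π^{k+1} m_{2k+2}(u) - π^k m_{2k}(u) = π^k u^{q^{2k+1}} m_{2k+1}(u)`, whence the convergence of the
sequences defining `φ₀, φ₁` on the open disk, and it lets the ultrametric inequality compute
`|m_n(u)|` on the annulus `|u| = γ`: the first summand dominates up to `n = s + 1`, after which
`|m_{s+1+2i}(u)| = |m_{s+1}(u)| |π|^{-i}`. Hence `|φ₀(u)| = γ^{1+q+⋯+q^s} |π|^{-(s+1)/2}`.

For the Casoratian `W_n(v,w) = m_{n+1}(v) m_n(w) - m_n(v) m_{n+1}(w)` the same recursion gives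
`π W_0 = v - w` and
`π^{n+2} W_{n+1} = -π^{n+1} W_n + π^{n+1} (v^{q^{n+1}} - w^{q^{n+1}}) m_{n+1}(v) m_{n+1}(w)`.
The radius condition `|v - w|^{q-1} γ² < |π|` propagates to the pairs `(v^{q^j}, w^{q^j})` and
makes every increment smaller than `|v - w|`, so `|φ₁(v) φ₀(w) - φ₀(v) φ₁(w)| = |v - w|`;
dividing by `φ₀(v) φ₀(w)` gives the claim.
-/

open Filter


/-- The coefficients `m_k(u)` of the quasi-logarithm of the Gross-Hopkins
universal deformation: `m_0 = 1`, `m_1(u) = u/π`, and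
`m_k(u) = (u/π)·m_{k-1}(u^q) + (1/π)·m_{k-2}(u^{q²})`. -/
noncomputable def ghm {C : Type*} [Field C] (π : C) (q : ℕ) : ℕ → C → C
  | 0, _ => 1
  | 1, u => u / π
  | (k+2), u => (u / π) * ghm π q (k+1) (u ^ q) + (1 / π) * ghm π q k (u ^ (q^2))

/-- First coordinate of the Gross-Hopkins period map:
`φ₀(u) = lim_k π^k · m_{2k}(u)`. -/
noncomputable def ghphi0 {C : Type*} [NormedField C] (π : C) (q : ℕ) (u : C) : C :=
  limUnder atTop (fun k => π ^ k * ghm π q (2*k) u)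

/-- Second coordinate of the Gross-Hopkins period map:
`φ₁(u) = lim_{k≥1} π^k · m_{2k-1}(u)`. -/
noncomputable def ghphi1 {C : Type*} [NormedField C] (π : C) (q : ℕ) (u : C) : C :=
  limUnder atTop (fun k => π ^ (k+1) * ghm π q (2*k+1) u)

open Finset Topology

section Algebra

variable {C : Type*} [Field C] (π : C) (q : ℕ)

theorem ghm_add_two_eq (n : ℕ) (u : C) :
    ghm π q (n + 2) u = (u ^ q ^ (n + 1) * ghm π q (n + 1) u + ghm π q n u) / π := by
  induction n using Nat.strong_induction_on generalizing u with
  | _ n ih =>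
  match n, ih with
  | 0, _ => simp only [ghm]; ring
  | 1, _ => simp only [ghm, ← pow_mul]; ring
  | n + 2, ih =>
    have e₁ : (u ^ q) ^ q ^ (n + 1 + 1) = u ^ q ^ (n + 2 + 1) := by
      rw [← pow_mul, ← pow_succ']
    have e₂ : (u ^ q ^ 2) ^ q ^ (n + 1) = u ^ q ^ (n + 2 + 1) := by
      rw [← pow_mul, ← pow_add, add_comm 2]
    rw [ghm.eq_3, ih (n + 1) (by omega) (u ^ q), ih n (by omega) (u ^ q ^ 2), e₁, e₂,
      ghm.eq_3 π q u (n + 1), ghm.eq_3 π q u n]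
    ring

theorem mul_ghm_add_two (hπ : π ≠ 0) (n : ℕ) (u : C) :
    π * ghm π q (n + 2) u = u ^ q ^ (n + 1) * ghm π q (n + 1) u + ghm π q n u := by
  rw [ghm_add_two_eq, mul_div_cancel₀ _ hπ]

noncomputable def ghWronskian (n : ℕ) (v w : C) : C :=
  ghm π q (n + 1) v * ghm π q n w - ghm π q n v * ghm π q (n + 1) w

theorem mul_ghWronskian_zero (hπ : π ≠ 0) (v w : C) : π * ghWronskian π q 0 v w = v - w := by
  simp only [ghWronskian, ghm]
  field_simp

theorem mul_ghWronskian_succ (hπ : π ≠ 0) (n : ℕ) (v w : C) :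
    π * ghWronskian π q (n + 1) v w =
      (v ^ q ^ (n + 1) - w ^ q ^ (n + 1)) * ghm π q (n + 1) v * ghm π q (n + 1) w
        - ghWronskian π q n v w := by
  have hv := mul_ghm_add_two π q hπ n v
  have hw := mul_ghm_add_two π q hπ n w
  simp only [ghWronskian]
  linear_combination ghm π q (n + 1) w * hv - ghm π q (n + 1) v * hw

end Algebra

theorem tendsto_pow_pow_div_pow {r a : ℝ} {q : ℕ} (hq : 2 ≤ q) (hr₀ : 0 ≤ r) (hr₁ : r < 1)
    (ha : 0 < a) : Tendsto (fun n ↦ r ^ q ^ n / a ^ n) atTop (𝓝 0) := by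
  refine (summable_of_ratio_norm_eventually_le (r := 1 / 2) (by norm_num) ?_).tendsto_atTop_zero
  obtain ⟨T, hT⟩ := exists_pow_lt_of_lt_one (by positivity : 0 < a / 2) hr₁
  filter_upwards [eventually_ge_atTop T] with n hn
  have hTq : T ≤ q ^ n * (q - 1) :=
    calc T ≤ n := hn
      _ ≤ q ^ n := (Nat.lt_pow_self (by omega)).le
      _ ≤ q ^ n * (q - 1) := Nat.le_mul_of_pos_right _ (by omega)
  have hsplit : r ^ q ^ (n + 1) = r ^ q ^ n * r ^ (q ^ n * (q - 1)) := by
    rw [← pow_add, pow_succ, add_comm (q ^ n), ← Nat.mul_add_one, Nat.sub_add_cancel (by omega)]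
  have hsmall : r ^ (q ^ n * (q - 1)) ≤ a / 2 := (pow_le_pow_of_le_one hr₀ hr₁.le hTq).trans hT.le
  rw [Real.norm_of_nonneg (by positivity), Real.norm_of_nonneg (by positivity), hsplit, pow_succ,
    ← div_div, mul_div_right_comm]
  calc r ^ q ^ n / a ^ n * r ^ (q ^ n * (q - 1)) / a
      ≤ r ^ q ^ n / a ^ n * (a / 2) / a := by gcongr
    _ = 1 / 2 * (r ^ q ^ n / a ^ n) := by field_simp

theorem mul_le_max_sq {x y : ℝ} (hx : 0 ≤ x) (hy : 0 ≤ y) : x * y ≤ max (x ^ 2) (y ^ 2) := by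
  rcases le_total x y with h | h
  · exact le_max_of_le_right (by nlinarith)
  · exact le_max_of_le_left (by nlinarith)

theorem norm_ghm_add_two {C : Type*} [NormedField C] (π : C) (q n : ℕ) (u : C) :
    ‖ghm π q (n + 2) u‖ = ‖u ^ q ^ (n + 1) * ghm π q (n + 1) u + ghm π q n u‖ / ‖π‖ := by
  rw [ghm_add_two_eq, norm_div]

section Ultrametric

variable {C : Type*} [NormedField C] [IsUltrametricDist C] {π : C} {q : ℕ}

theorem norm_sub_le_max (x y : C) : ‖x - y‖ ≤ max ‖x‖ ‖y‖ := by
  simpa [sub_eq_add_neg] using IsUltrametricDist.norm_add_le_max x (-y)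

theorem norm_eq_of_norm_sub_lt_right {x y : C} (h : ‖x - y‖ < ‖y‖) : ‖x‖ = ‖y‖ := by
  rw [← sub_add_cancel x y, IsUltrametricDist.norm_add_eq_max_of_norm_ne_norm h.ne,
    max_eq_right h.le]

theorem norm_sub_le_of_norm_eq {v w : C} (hw : ‖w‖ = ‖v‖) : ‖v - w‖ ≤ ‖v‖ :=
  (norm_sub_le_max v w).trans (by rw [hw, max_self])

theorem norm_ghm_add_two_le (n : ℕ) (u : C) :
    ‖ghm π q (n + 2) u‖ ≤ max (‖u‖ ^ q ^ (n + 1) * ‖ghm π q (n + 1) u‖) ‖ghm π q n u‖ / ‖π‖ := by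
  rw [norm_ghm_add_two, ← norm_pow, ← norm_mul]
  gcongr
  exact IsUltrametricDist.norm_add_le_max _ _

theorem norm_ghm_le (hπ₀ : 0 < ‖π‖) (hπ₁ : ‖π‖ ≤ 1) {u : C} (hu : ‖u‖ ≤ 1) (n : ℕ) :
    ‖ghm π q n u‖ ≤ 1 / ‖π‖ ^ n := by
  induction n using Nat.twoStepInduction with
  | zero => simp [ghm]
  | one => rw [ghm, norm_div, pow_one]; gcongr
  | more n ih₀ ih₁ =>
    refine (norm_ghm_add_two_le n u).trans ?_
    rw [pow_succ ‖π‖ (n + 1), ← div_div]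
    gcongr
    refine max_le ((mul_le_of_le_one_left (norm_nonneg _) (pow_le_one₀ (norm_nonneg _) hu)).trans
      ih₁) (ih₀.trans ?_)
    exact one_div_le_one_div_of_le (by positivity) (pow_le_pow_of_le_one hπ₀.le hπ₁ n.le_succ)

theorem norm_pi_pow_mul_ghm_sub_le (hπ₀ : 0 < ‖π‖) (hπ₁ : ‖π‖ ≤ 1) {u : C} (hu : ‖u‖ ≤ 1)
    (k n : ℕ) :
    ‖π ^ (k + 1) * ghm π q (n + 2) u - π ^ k * ghm π q n u‖ ≤
      ‖u‖ ^ q ^ (n + 1) / ‖π‖ ^ (n + 1) := by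
  have hπ : π ≠ 0 := norm_pos_iff.mp hπ₀
  have hdiff : π ^ (k + 1) * ghm π q (n + 2) u - π ^ k * ghm π q n u
      = π ^ k * (u ^ q ^ (n + 1) * ghm π q (n + 1) u) := by
    linear_combination π ^ k * mul_ghm_add_two π q hπ n u
  rw [hdiff, norm_mul, norm_mul, norm_pow, norm_pow, div_eq_mul_one_div]
  calc ‖π‖ ^ k * (‖u‖ ^ q ^ (n + 1) * ‖ghm π q (n + 1) u‖)
      ≤ 1 * (‖u‖ ^ q ^ (n + 1) * (1 / ‖π‖ ^ (n + 1))) := by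
        gcongr
        · exact pow_le_one₀ hπ₀.le hπ₁
        · exact norm_ghm_le hπ₀ hπ₁ hu _
    _ = _ := one_mul _

theorem cauchySeq_pi_pow_mul_ghm (hq : 2 ≤ q) (hπ₀ : 0 < ‖π‖) (hπ₁ : ‖π‖ ≤ 1) {u : C}
    (hu : ‖u‖ < 1) (c : ℕ) : CauchySeq fun k ↦ π ^ (k + c) * ghm π q (2 * k + c) u := by
  apply NonarchimedeanAddGroup.cauchySeq_of_tendsto_sub_nhds_zero
  have hlin : Tendsto (fun k ↦ 2 * k + c + 1) atTop atTop :=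
    tendsto_atTop_mono (fun k ↦ show k ≤ 2 * k + c + 1 by omega) tendsto_id
  refine squeeze_zero_norm (fun k ↦ ?_)
    ((tendsto_pow_pow_div_pow hq (norm_nonneg u) hu hπ₀).comp hlin)
  have := norm_pi_pow_mul_ghm_sub_le (q := q) hπ₀ hπ₁ hu.le (k + c) (2 * k + c)
  rwa [show k + c + 1 = k + 1 + c by ring, show 2 * k + c + 2 = 2 * (k + 1) + c by ring] at this

theorem norm_ghm_add_two_of_lt {n : ℕ} {u : C}
    (h : ‖ghm π q n u‖ < ‖u‖ ^ q ^ (n + 1) * ‖ghm π q (n + 1) u‖) :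
    ‖ghm π q (n + 2) u‖ = ‖u‖ ^ q ^ (n + 1) * ‖ghm π q (n + 1) u‖ / ‖π‖ := by
  rw [← norm_pow, ← norm_mul] at h ⊢
  rw [norm_ghm_add_two, IsUltrametricDist.norm_add_eq_max_of_norm_ne_norm h.ne', max_eq_left h.le]

theorem norm_ghm_add_two_of_gt {n : ℕ} {u : C}
    (h : ‖u‖ ^ q ^ (n + 1) * ‖ghm π q (n + 1) u‖ < ‖ghm π q n u‖) :
    ‖ghm π q (n + 2) u‖ = ‖ghm π q n u‖ / ‖π‖ := by
  rw [← norm_pow, ← norm_mul] at h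
  rw [norm_ghm_add_two, IsUltrametricDist.norm_add_eq_max_of_norm_ne_norm h.ne, max_eq_right h.le]

theorem norm_ghm_of_le_succ (hπ₀ : 0 < ‖π‖) (hq : 1 ≤ q) {u : C} (hu₀ : 0 < ‖u‖)
    (hu₁ : ‖u‖ ≤ 1) {s : ℕ} (h : ‖π‖ < ‖u‖ ^ (q ^ s + q ^ (s - 1))) :
    ∀ n ≤ s + 1, ‖ghm π q n u‖ = ‖u‖ ^ (∑ i ∈ range n, q ^ i) / ‖π‖ ^ n := by
  intro n
  induction n using Nat.twoStepInduction with
  | zero => simp [ghm]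
  | one => simp [ghm]
  | more n ih₀ ih₁ =>
    intro hn
    set A := ‖u‖ ^ (∑ i ∈ range n, q ^ i) / ‖π‖ ^ n
    have hA₁ : ‖u‖ ^ (∑ i ∈ range (n + 1), q ^ i) / ‖π‖ ^ (n + 1) = A * (‖u‖ ^ q ^ n / ‖π‖) := by
      rw [sum_range_succ, pow_add, pow_succ]; ring
    have hA₂ : ‖u‖ ^ (∑ i ∈ range (n + 2), q ^ i) / ‖π‖ ^ (n + 2)
        = A * (‖u‖ ^ q ^ n / ‖π‖) * (‖u‖ ^ q ^ (n + 1) / ‖π‖) := by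
      rw [sum_range_succ, sum_range_succ, pow_add, pow_add, pow_succ, pow_succ]; ring
    have hdom : 1 < ‖u‖ ^ q ^ n * ‖u‖ ^ q ^ (n + 1) / ‖π‖ := by
      rw [one_lt_div hπ₀, ← pow_add]
      refine h.trans_le (pow_le_pow_of_le_one hu₀.le hu₁ ?_)
      rw [add_comm]
      gcongr <;> omega
    rw [norm_ghm_add_two_of_lt, ih₁ (by omega), hA₁, hA₂]
    · ring
    rw [ih₀ (by omega), ih₁ (by omega), hA₁]
    calc A < A * (‖u‖ ^ q ^ n * ‖u‖ ^ q ^ (n + 1) / ‖π‖) :=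
          lt_mul_of_one_lt_right (by positivity) hdom
      _ = ‖u‖ ^ q ^ (n + 1) * (A * (‖u‖ ^ q ^ n / ‖π‖)) := by ring

theorem norm_ghm_add_two_eq_div_pow (hπ₀ : 0 < ‖π‖) {n k : ℕ} {u : C} {E R : ℝ}
    (hE : ‖ghm π q n u‖ = E / ‖π‖ ^ k) (hR : ‖ghm π q (n + 1) u‖ ≤ R / ‖π‖ ^ (k + 1))
    (hlt : ‖u‖ ^ q ^ (n + 1) * R < ‖π‖ * E) : ‖ghm π q (n + 2) u‖ = E / ‖π‖ ^ (k + 1) := by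
  have hdom : ‖u‖ ^ q ^ (n + 1) * ‖ghm π q (n + 1) u‖ < ‖ghm π q n u‖ :=
    calc ‖u‖ ^ q ^ (n + 1) * ‖ghm π q (n + 1) u‖ ≤ ‖u‖ ^ q ^ (n + 1) * R / ‖π‖ ^ (k + 1) := by
          rw [mul_div_assoc]; gcongr
      _ < ‖π‖ * E / ‖π‖ ^ (k + 1) := by gcongr
      _ = ‖ghm π q n u‖ := by rw [hE, pow_succ]; field_simp
  rw [norm_ghm_add_two_of_gt hdom, hE, pow_succ ‖π‖ k, div_div]

theorem norm_ghm_add_two_le_div_pow (hπ₀ : 0 < ‖π‖) {n k : ℕ} {u : C} {E R : ℝ}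
    (hR : ‖ghm π q n u‖ ≤ R / ‖π‖ ^ k) (hE : ‖ghm π q (n + 1) u‖ = E / ‖π‖ ^ k)
    (hle : ‖u‖ ^ q ^ (n + 1) * E ≤ R) : ‖ghm π q (n + 2) u‖ ≤ R / ‖π‖ ^ (k + 1) := by
  refine (norm_ghm_add_two_le n u).trans ?_
  rw [pow_succ ‖π‖ k, ← div_div]
  gcongr
  refine max_le ?_ hR
  rw [hE, ← mul_div_assoc]
  gcongr

theorem norm_ghm_add_two_mul_of_dominates (hπ₀ : 0 < ‖π‖) {n k : ℕ} {u : C} {E R : ℝ}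
    (hE : ‖ghm π q n u‖ = E / ‖π‖ ^ k) (hR : ‖ghm π q (n + 1) u‖ ≤ R / ‖π‖ ^ (k + 1))
    (hlt : ∀ i, ‖u‖ ^ q ^ (n + 2 * i + 1) * R < ‖π‖ * E)
    (hle : ∀ i, ‖u‖ ^ q ^ (n + 2 * i + 2) * E ≤ R) (i : ℕ) :
    ‖ghm π q (n + 2 * i) u‖ = E / ‖π‖ ^ (k + i) ∧
      ‖ghm π q (n + 2 * i + 1) u‖ ≤ R / ‖π‖ ^ (k + i + 1) := by
  induction i with
  | zero => exact ⟨hE, hR⟩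
  | succ i ih =>
    have hE' : ‖ghm π q (n + 2 * i + 2) u‖ = E / ‖π‖ ^ (k + i + 1) :=
      norm_ghm_add_two_eq_div_pow hπ₀ ih.1 ih.2 (hlt i)
    exact ⟨hE', norm_ghm_add_two_le_div_pow hπ₀ ih.2 hE' (hle i)⟩

/-- Past `n = s + 1` the second summand of the fixed-argument recursion dominates at every other
step; at the remaining steps either summand may dominate, so `m_{s+2+2i}` is only bounded. -/
theorem norm_ghm_of_succ_le (hπ₀ : 0 < ‖π‖) (hq : 2 ≤ q) {u : C} (hu₀ : 0 < ‖u‖) (hu₁ : ‖u‖ < 1)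
    {s : ℕ} (h₁ : ‖π‖ < ‖u‖ ^ (q ^ s + q ^ (s - 1)))
    (h₂ : ‖u‖ ^ (q ^ (s + 2) + q ^ (s + 1)) < ‖π‖) (i : ℕ) :
    ‖ghm π q (s + 1 + 2 * i) u‖ = ‖u‖ ^ (∑ j ∈ range (s + 1), q ^ j) / ‖π‖ ^ (s + 1 + i) ∧
      ‖ghm π q (s + 1 + 2 * i + 1) u‖ ≤
        max (‖u‖ ^ ∑ j ∈ range (s + 2), q ^ j) (‖π‖ * ‖u‖ ^ ∑ j ∈ range s, q ^ j) /
          ‖π‖ ^ (s + 1 + i + 1) := by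
  have hB := norm_ghm_of_le_succ hπ₀ (by omega) hu₀ hu₁.le h₁
  set E := ‖u‖ ^ ∑ j ∈ range (s + 1), q ^ j
  set R := max (‖u‖ ^ ∑ j ∈ range (s + 2), q ^ j) (‖π‖ * ‖u‖ ^ ∑ j ∈ range s, q ^ j)
  have hE₂ : ‖u‖ ^ ∑ j ∈ range (s + 2), q ^ j = ‖u‖ ^ q ^ (s + 1) * E := by
    rw [sum_range_succ _ (s + 1), pow_add, mul_comm]
  have hE₁ : E = ‖u‖ ^ (∑ j ∈ range s, q ^ j) * ‖u‖ ^ q ^ s := by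
    simp only [E, sum_range_succ, pow_add]
  have hle : ∀ m, s + 1 ≤ m → ‖u‖ ^ q ^ m * E ≤ R := fun m hm ↦ by
    refine le_max_of_le_left ?_
    rw [hE₂]
    exact mul_le_mul_of_nonneg_right
      (pow_le_pow_of_le_one hu₀.le hu₁.le (Nat.pow_le_pow_right (by omega) hm)) (by positivity)
  have hlt : ∀ m, s + 2 ≤ m → ‖u‖ ^ q ^ m * R < ‖π‖ * E := fun m hm ↦ by
    rw [mul_max_of_nonneg _ _ (by positivity)]
    refine max_lt ?_ ?_
    · calc ‖u‖ ^ q ^ m * ‖u‖ ^ ∑ j ∈ range (s + 2), q ^ j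
          = ‖u‖ ^ (q ^ m + q ^ (s + 1)) * E := by rw [hE₂, pow_add]; ring
        _ ≤ ‖u‖ ^ (q ^ (s + 2) + q ^ (s + 1)) * E :=
          mul_le_mul_of_nonneg_right (pow_le_pow_of_le_one hu₀.le hu₁.le
            (Nat.add_le_add_right (Nat.pow_le_pow_right (by omega) hm) _)) (by positivity)
        _ < ‖π‖ * E := by gcongr
    · calc ‖u‖ ^ q ^ m * (‖π‖ * ‖u‖ ^ ∑ j ∈ range s, q ^ j)
          = ‖π‖ * ‖u‖ ^ (∑ j ∈ range s, q ^ j) * ‖u‖ ^ q ^ m := by ring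
        _ < ‖π‖ * ‖u‖ ^ (∑ j ∈ range s, q ^ j) * ‖u‖ ^ q ^ s :=
          mul_lt_mul_of_pos_left (pow_lt_pow_right_of_lt_one₀ hu₀ hu₁
            (Nat.pow_lt_pow_right (by omega) (by omega))) (by positivity)
        _ = ‖π‖ * E := by rw [hE₁, mul_assoc]
  have hR : ‖ghm π q (s + 2) u‖ ≤ R / ‖π‖ ^ (s + 1 + 1) := by
    refine norm_ghm_add_two_le_div_pow hπ₀ ?_ (hB (s + 1) le_rfl) (hle (s + 1) le_rfl)
    calc ‖ghm π q s u‖ = ‖π‖ * ‖u‖ ^ (∑ j ∈ range s, q ^ j) / ‖π‖ ^ (s + 1) := by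
          rw [hB s (by omega), pow_succ]; field_simp
      _ ≤ R / ‖π‖ ^ (s + 1) := by gcongr; exact le_max_right _ _
  exact norm_ghm_add_two_mul_of_dominates hπ₀ (hB (s + 1) le_rfl) hR
    (fun i ↦ hlt _ (by omega)) (fun i ↦ hle _ (by omega)) i

theorem exists_pi_pow_mul_norm_ghm_sq_le (hπ₀ : 0 < ‖π‖) (hq : 2 ≤ q) {u : C} (hu₀ : 0 < ‖u‖)
    (hu₁ : ‖u‖ < 1) {s : ℕ} (hs : 1 ≤ s) (h₁ : ‖π‖ < ‖u‖ ^ (q ^ s + q ^ (s - 1)))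
    (h₂ : ‖u‖ ^ (q ^ (s + 2) + q ^ (s + 1)) < ‖π‖) {j : ℕ} (hj : 0 < j) :
    ∃ k, 0 < k ∧ k ≤ j ∧
      ‖π‖ ^ j * ‖ghm π q j u‖ ^ 2 ≤ (‖u‖ ^ ∑ i ∈ range k, q ^ i) ^ 2 / ‖π‖ ^ k := by
  by_cases hjs : j ≤ s + 1
  · refine ⟨j, hj, le_rfl, le_of_eq ?_⟩
    rw [norm_ghm_of_le_succ hπ₀ (by omega) hu₀ hu₁.le h₁ j hjs]
    field_simp
  obtain ⟨i, rfl | rfl⟩ : ∃ i, j = s + 1 + 2 * i ∨ j = s + 1 + 2 * i + 1 := by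
    obtain ⟨i, hi | hi⟩ := Nat.even_or_odd' (j - (s + 1))
    · exact ⟨i, Or.inl (by omega)⟩
    · exact ⟨i, Or.inr (by omega)⟩
  · refine ⟨s + 1, by omega, by omega, le_of_eq ?_⟩
    rw [(norm_ghm_of_succ_le hπ₀ hq hu₀ hu₁ h₁ h₂ i).1]
    field_simp
    ring
  · set X := ‖u‖ ^ ∑ i ∈ range (s + 2), q ^ i
    set Y := ‖u‖ ^ ∑ i ∈ range s, q ^ i
    have hbound : ‖π‖ ^ (s + 1 + 2 * i + 1) * ‖ghm π q (s + 1 + 2 * i + 1) u‖ ^ 2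
        ≤ max X (‖π‖ * Y) ^ 2 / ‖π‖ ^ (s + 2) :=
      calc _ ≤ ‖π‖ ^ (s + 1 + 2 * i + 1) * (max X (‖π‖ * Y) / ‖π‖ ^ (s + 1 + i + 1)) ^ 2 := by
            gcongr; exact (norm_ghm_of_succ_le hπ₀ hq hu₀ hu₁ h₁ h₂ i).2
        _ = _ := by field_simp; ring
    rcases max_cases X (‖π‖ * Y) with ⟨hmax, -⟩ | ⟨hmax, -⟩ <;> rw [hmax] at hbound
    · exact ⟨s + 2, by omega, by omega, hbound⟩
    · refine ⟨s, by omega, by omega, hbound.trans_eq ?_⟩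
      field_simp
      ring

theorem norm_pow_sub_pow_le (hchoose : ∀ i, 0 < i → i < q → ‖(q.choose i : C)‖ ≤ ‖π‖)
    {v w : C} (h : ‖v - w‖ ≤ ‖v‖) :
    ‖v ^ q - w ^ q‖ ≤ ‖v - w‖ * max (‖v - w‖ ^ (q - 1)) (‖π‖ * ‖v‖ ^ (q - 1)) := by
  set δ := ‖v - w‖
  have hexp : w ^ q - v ^ q = ∑ k ∈ range q, v ^ k * (w - v) ^ (q - k) * (q.choose k : C) := by
    rw [show w = v + (w - v) by ring, add_pow, sum_range_succ]
    simp
  rw [norm_sub_rev, hexp]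
  refine IsUltrametricDist.norm_sum_le_of_forall_le_of_nonneg (by positivity) fun k hk ↦ ?_
  have hkq := mem_range.mp hk
  rw [norm_mul, norm_mul, norm_pow, norm_pow, norm_sub_rev w v]
  rcases Nat.eq_zero_or_pos k with rfl | hk₀
  · calc 1 * δ ^ (q - 0) * ‖(q.choose 0 : C)‖ = δ * δ ^ (q - 1) := by
          rw [Nat.choose_zero_right, Nat.cast_one, norm_one, ← pow_succ', Nat.sub_add_cancel hkq,
            Nat.sub_zero, one_mul, mul_one]
      _ ≤ δ * max (δ ^ (q - 1)) (‖π‖ * ‖v‖ ^ (q - 1)) := by gcongr; exact le_max_left _ _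
  · have hpow : ‖v‖ ^ k * δ ^ (q - k) ≤ δ * ‖v‖ ^ (q - 1) :=
      calc ‖v‖ ^ k * δ ^ (q - k) = δ * (‖v‖ ^ k * δ ^ (q - 1 - k)) := by
            rw [show q - k = q - 1 - k + 1 by omega, pow_succ]; ring
        _ ≤ δ * (‖v‖ ^ k * ‖v‖ ^ (q - 1 - k)) := by gcongr
        _ = δ * ‖v‖ ^ (q - 1) := by rw [← pow_add, Nat.add_sub_cancel' (by omega)]
    calc ‖v‖ ^ k * δ ^ (q - k) * ‖(q.choose k : C)‖ ≤ δ * ‖v‖ ^ (q - 1) * ‖π‖ := by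
          gcongr
          exact hchoose k hk₀ hkq
      _ ≤ δ * max (δ ^ (q - 1)) (‖π‖ * ‖v‖ ^ (q - 1)) := by
          rw [mul_assoc, mul_comm (‖v‖ ^ _)]
          gcongr
          exact le_max_right _ _


theorem norm_pow_sub_pow_le_norm_sub (hchoose : ∀ i, 0 < i → i < q → ‖(q.choose i : C)‖ ≤ ‖π‖)
    (hπ₁ : ‖π‖ ≤ 1) {v w : C} (hw : ‖w‖ = ‖v‖) (hv : ‖v‖ ≤ 1) :
    ‖v ^ q - w ^ q‖ ≤ ‖v - w‖ := by
  have hδv := norm_sub_le_of_norm_eq hw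
  refine (norm_pow_sub_pow_le hchoose hδv).trans (mul_le_of_le_one_right (norm_nonneg _) ?_)
  exact max_le (pow_le_one₀ (norm_nonneg _) (hδv.trans hv))
    (mul_le_one₀ hπ₁ (by positivity) (pow_le_one₀ (norm_nonneg _) hv))

theorem norm_pow_sub_pow_mul_sq_le (hchoose : ∀ i, 0 < i → i < q → ‖(q.choose i : C)‖ ≤ ‖π‖)
    (hq : 1 ≤ q) {v w : C} (hw : ‖w‖ = ‖v‖) :
    ‖v ^ q - w ^ q‖ * ‖v‖ ^ 2 ≤
      ‖v - w‖ * max (‖v - w‖ ^ (q - 1) * ‖v‖ ^ 2) (‖π‖ * ‖v‖ ^ (q + 1)) := by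
  have hδv := norm_sub_le_of_norm_eq hw
  have hpow : ‖v‖ ^ (q + 1) = ‖v‖ ^ (q - 1) * ‖v‖ ^ 2 := by
    rw [← pow_add]; congr 1; omega
  calc ‖v ^ q - w ^ q‖ * ‖v‖ ^ 2
      ≤ ‖v - w‖ * max (‖v - w‖ ^ (q - 1)) (‖π‖ * ‖v‖ ^ (q - 1)) * ‖v‖ ^ 2 := by
        gcongr; exact norm_pow_sub_pow_le hchoose hδv
    _ = _ := by rw [mul_assoc, max_mul_of_nonneg _ _ (by positivity), hpow, mul_assoc]

section Iterate

variable {v w : C}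

theorem norm_iterate_pow_sub_pow_pow_mul_sq_lt
    (hchoose : ∀ i, 0 < i → i < q → ‖(q.choose i : C)‖ ≤ ‖π‖) (hq : 1 ≤ q) (hπ₀ : 0 < ‖π‖)
    (hπ₁ : ‖π‖ ≤ 1) (hw : ‖w‖ = ‖v‖) (hv : ‖v‖ ≤ 1) (hδ : ‖v - w‖ ^ (q - 1) * ‖v‖ ^ 2 < ‖π‖)
    (j : ℕ) : ‖v ^ q ^ j - w ^ q ^ j‖ ^ (q - 1) * (‖v‖ ^ q ^ j) ^ 2 < ‖π‖ := by
  induction j with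
  | zero => simpa using hδ
  | succ j ih =>
    set δ := ‖v ^ q ^ j - w ^ q ^ j‖
    set ρ := ‖v‖ ^ q ^ j
    have hρ₀ : 0 ≤ ρ := by positivity
    have hρ₁ : ρ ≤ 1 := pow_le_one₀ (norm_nonneg _) hv
    have hnorm : ‖v ^ q ^ j‖ = ρ := norm_pow _ _
    have hstep := norm_pow_sub_pow_mul_sq_le hchoose hq (v := v ^ q ^ j) (w := w ^ q ^ j)
      (by rw [norm_pow, norm_pow, hw])
    rw [hnorm, ← pow_mul, ← pow_mul, ← pow_succ] at hstep
    set X := ‖v ^ q ^ (j + 1) - w ^ q ^ (j + 1)‖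
    have hXρ : X * ρ ^ 2 ≤ δ * ‖π‖ := hstep.trans <| by
      gcongr
      exact max_le ih.le (mul_le_of_le_one_right hπ₀.le (pow_le_one₀ hρ₀ hρ₁))
    have hsq : (‖v‖ ^ q ^ (j + 1)) ^ 2 = (ρ ^ 2) ^ (q - 1) * ρ ^ 2 := by
      rw [← pow_succ, Nat.sub_add_cancel hq, ← pow_mul, ← pow_mul, pow_succ, ← pow_mul, mul_comm 2,
        mul_assoc]
    calc X ^ (q - 1) * (‖v‖ ^ q ^ (j + 1)) ^ 2 = (X * ρ ^ 2) ^ (q - 1) * ρ ^ 2 := by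
          rw [hsq, mul_pow, mul_assoc]
      _ ≤ (δ * ‖π‖) ^ (q - 1) * ρ ^ 2 := by gcongr
      _ = ‖π‖ ^ (q - 1) * (δ ^ (q - 1) * ρ ^ 2) := by ring
      _ ≤ 1 * (δ ^ (q - 1) * ρ ^ 2) := by gcongr; exact pow_le_one₀ hπ₀.le hπ₁
      _ < ‖π‖ := by rwa [one_mul]

theorem norm_iterate_pow_sub_pow_mul_lt
    (hchoose : ∀ i, 0 < i → i < q → ‖(q.choose i : C)‖ ≤ ‖π‖) (hq : 1 ≤ q) (hπ₀ : 0 < ‖π‖)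
    (hπ₁ : ‖π‖ ≤ 1) (hw : ‖w‖ = ‖v‖) (hv : ‖v‖ < 1) (hδ : ‖v - w‖ ^ (q - 1) * ‖v‖ ^ 2 < ‖π‖)
    (hvw : v ≠ w) {j : ℕ} (hj : 0 < j) :
    ‖v ^ q ^ j - w ^ q ^ j‖ * (‖v‖ ^ ∑ i ∈ range j, q ^ i) ^ 2 < ‖v - w‖ * ‖π‖ ^ j := by
  set δ : ℕ → ℝ := fun j ↦ ‖v ^ q ^ j - w ^ q ^ j‖
  set P : ℕ → ℝ := fun j ↦ ‖v‖ ^ ∑ i ∈ range j, q ^ i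
  set M : ℕ → ℝ := fun j ↦ max (δ j ^ (q - 1) * (‖v‖ ^ q ^ j) ^ 2) (‖π‖ * (‖v‖ ^ q ^ j) ^ (q + 1))
  have hM : ∀ j, M j < ‖π‖ := fun j ↦ max_lt
    (norm_iterate_pow_sub_pow_pow_mul_sq_lt hchoose hq hπ₀ hπ₁ hw hv.le hδ j)
    (mul_lt_of_lt_one_right hπ₀ (pow_lt_one₀ (by positivity) (pow_lt_one₀ (norm_nonneg _) hv
      (by positivity)) (by omega)))
  have hstep : ∀ j, δ (j + 1) * P (j + 1) ^ 2 ≤ δ j * P j ^ 2 * M j := fun j ↦ by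
    have h := norm_pow_sub_pow_mul_sq_le hchoose hq (v := v ^ q ^ j) (w := w ^ q ^ j)
      (by rw [norm_pow, norm_pow, hw])
    rw [norm_pow, ← pow_mul, ← pow_mul, ← pow_succ] at h
    have hP : P (j + 1) = P j * ‖v‖ ^ q ^ j := by simp only [P, sum_range_succ, pow_add]
    calc δ (j + 1) * P (j + 1) ^ 2 = δ (j + 1) * (‖v‖ ^ q ^ j) ^ 2 * P j ^ 2 := by rw [hP]; ring
      _ ≤ δ j * M j * P j ^ 2 := by gcongr
      _ = δ j * P j ^ 2 * M j := by ring
  have hM₀ : ∀ j, 0 ≤ M j := fun j ↦ le_max_of_le_right (by positivity)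
  have hle : ∀ j, δ j * P j ^ 2 ≤ δ 0 * ‖π‖ ^ j := fun j ↦ by
    induction j with
    | zero => simp [P]
    | succ j ih =>
      calc δ (j + 1) * P (j + 1) ^ 2 ≤ δ j * P j ^ 2 * M j := hstep j
        _ ≤ δ 0 * ‖π‖ ^ j * ‖π‖ := mul_le_mul ih (hM j).le (hM₀ j) (by positivity)
        _ = δ 0 * ‖π‖ ^ (j + 1) := by ring
  obtain ⟨j, rfl⟩ := Nat.exists_eq_add_of_le' hj
  have hδ₀ : 0 < δ 0 := by simpa [δ, sub_eq_zero] using hvw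
  calc δ (j + 1) * P (j + 1) ^ 2 ≤ δ j * P j ^ 2 * M j := hstep j
    _ ≤ δ 0 * ‖π‖ ^ j * M j := mul_le_mul_of_nonneg_right (hle j) (hM₀ j)
    _ < δ 0 * ‖π‖ ^ j * ‖π‖ := mul_lt_mul_of_pos_left (hM j) (by positivity)
    _ = _ := by simp [δ, pow_succ, mul_assoc]

theorem norm_iterate_pow_sub_pow_antitone
    (hchoose : ∀ i, 0 < i → i < q → ‖(q.choose i : C)‖ ≤ ‖π‖) (hπ₁ : ‖π‖ ≤ 1)
    (hw : ‖w‖ = ‖v‖) (hv : ‖v‖ ≤ 1) : Antitone fun j ↦ ‖v ^ q ^ j - w ^ q ^ j‖ :=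
  antitone_nat_of_succ_le fun j ↦ by
    rw [pow_succ, pow_mul, pow_mul]
    exact norm_pow_sub_pow_le_norm_sub hchoose hπ₁ (by rw [norm_pow, norm_pow, hw])
      (by rw [norm_pow]; exact pow_le_one₀ (norm_nonneg _) hv)

end Iterate

theorem norm_pi_pow_mul_ghWronskian (hπ : π ≠ 0) {v w : C}
    (hterm : ∀ j, 0 < j →
      ‖π ^ j * (v ^ q ^ j - w ^ q ^ j) * ghm π q j v * ghm π q j w‖ < ‖v - w‖) (n : ℕ) :
    ‖π ^ (n + 1) * ghWronskian π q n v w‖ = ‖v - w‖ := by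
  have hδ : 0 < ‖v - w‖ := (norm_nonneg _).trans_lt (hterm 1 one_pos)
  have hdev : ∀ n, ‖π ^ (n + 1) * ghWronskian π q n v w - (-1) ^ n * (v - w)‖ < ‖v - w‖ := by
    intro n
    induction n with
    | zero => simpa [mul_ghWronskian_zero π q hπ] using hδ
    | succ n ih =>
      have hrec : π ^ (n + 2) * ghWronskian π q (n + 1) v w - (-1) ^ (n + 1) * (v - w)
          = π ^ (n + 1) * (v ^ q ^ (n + 1) - w ^ q ^ (n + 1)) * ghm π q (n + 1) v
              * ghm π q (n + 1) w
            - (π ^ (n + 1) * ghWronskian π q n v w - (-1) ^ n * (v - w)) := by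
        linear_combination π ^ (n + 1) * mul_ghWronskian_succ π q hπ n v w
      rw [hrec]
      exact (norm_sub_le_max _ _).trans_lt (max_lt (hterm _ n.succ_pos) ih)
  have hsign : ‖(-1) ^ n * (v - w)‖ = ‖v - w‖ := by simp
  exact (norm_eq_of_norm_sub_lt_right (hsign ▸ hdev n)).trans hsign

theorem norm_ghWronskian_increment_lt
    (hchoose : ∀ i, 0 < i → i < q → ‖(q.choose i : C)‖ ≤ ‖π‖) (hq : 2 ≤ q) (hπ₀ : 0 < ‖π‖)
    (hπ₁ : ‖π‖ ≤ 1) {v w : C} (hw : ‖w‖ = ‖v‖) (hv₀ : 0 < ‖v‖) (hv₁ : ‖v‖ < 1) {s : ℕ} (hs : 1 ≤ s) (h₁ : ‖π‖ < ‖v‖ ^ (q ^ s + q ^ (s - 1)))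
    (h₂ : ‖v‖ ^ (q ^ (s + 2) + q ^ (s + 1)) < ‖π‖) (hδ : ‖v - w‖ ^ (q - 1) * ‖v‖ ^ 2 < ‖π‖)
    (hvw : v ≠ w) {j : ℕ} (hj : 0 < j) :
    ‖π ^ j * (v ^ q ^ j - w ^ q ^ j) * ghm π q j v * ghm π q j w‖ < ‖v - w‖ := by
  set δ := ‖v ^ q ^ j - w ^ q ^ j‖
  have hk : ∀ k, 0 < k → k ≤ j →
      δ * ((‖v‖ ^ ∑ i ∈ range k, q ^ i) ^ 2 / ‖π‖ ^ k) < ‖v - w‖ := fun k hk hkj ↦ by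
    rw [mul_div_assoc', div_lt_iff₀ (by positivity)]
    calc δ * (‖v‖ ^ ∑ i ∈ range k, q ^ i) ^ 2
        ≤ ‖v ^ q ^ k - w ^ q ^ k‖ * (‖v‖ ^ ∑ i ∈ range k, q ^ i) ^ 2 := by
          gcongr; exact norm_iterate_pow_sub_pow_antitone hchoose hπ₁ hw hv₁.le hkj
      _ < ‖v - w‖ * ‖π‖ ^ k :=
          norm_iterate_pow_sub_pow_mul_lt hchoose (by omega) hπ₀ hπ₁ hw hv₁ hδ hvw hk
  obtain ⟨kv, hkv₀, hkvj, hv⟩ := exists_pi_pow_mul_norm_ghm_sq_le hπ₀ hq hv₀ hv₁ hs h₁ h₂ hj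
  obtain ⟨kw, hkw₀, hkwj, hw'⟩ := exists_pi_pow_mul_norm_ghm_sq_le (u := w) hπ₀ hq
    (hw ▸ hv₀) (hw ▸ hv₁) hs (hw ▸ h₁) (hw ▸ h₂) hj
  rw [hw] at hw'
  rw [norm_mul, norm_mul, norm_mul, norm_pow]
  calc ‖π‖ ^ j * δ * ‖ghm π q j v‖ * ‖ghm π q j w‖
      = δ * (‖π‖ ^ j * (‖ghm π q j v‖ * ‖ghm π q j w‖)) := by ring
    _ ≤ δ * max (‖π‖ ^ j * ‖ghm π q j v‖ ^ 2) (‖π‖ ^ j * ‖ghm π q j w‖ ^ 2) := by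
        rw [← mul_max_of_nonneg _ _ (by positivity)]
        gcongr
        exact mul_le_max_sq (norm_nonneg _) (norm_nonneg _)
    _ < ‖v - w‖ := by
        rw [mul_max_of_nonneg _ _ (norm_nonneg _)]
        exact max_lt ((mul_le_mul_of_nonneg_left hv (norm_nonneg _)).trans_lt (hk kv hkv₀ hkvj))
          ((mul_le_mul_of_nonneg_left hw' (norm_nonneg _)).trans_lt (hk kw hkw₀ hkwj))

theorem norm_eq_of_norm_sub_pow_mul_sq_lt {a : ℝ} {s : ℕ} (hq : 1 ≤ q) (hs : 1 ≤ s) {v w : C} (hv : ‖v‖ ≤ 1)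
    (h₁ : a < ‖v‖ ^ (q ^ s + q ^ (s - 1))) (hδ : ‖v - w‖ ^ (q - 1) * ‖v‖ ^ 2 < a) :
    ‖w‖ = ‖v‖ := by
  have hexp : q - 1 + 2 ≤ q ^ s + q ^ (s - 1) := by
    have := Nat.le_self_pow (show s ≠ 0 by omega) q
    have := Nat.one_le_pow (s - 1) q (by omega)
    omega
  have hlt : ‖v - w‖ ^ (q - 1) * ‖v‖ ^ 2 < ‖v‖ ^ (q - 1) * ‖v‖ ^ 2 :=
    calc _ < a := hδ
      _ < _ := h₁
      _ ≤ ‖v‖ ^ (q - 1 + 2) := pow_le_pow_of_le_one (norm_nonneg _) hv hexp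
      _ = _ := pow_add _ _ _
  have := lt_of_pow_lt_pow_left₀ _ (norm_nonneg _) (lt_of_mul_lt_mul_right hlt (sq_nonneg _))
  exact norm_eq_of_norm_sub_lt_right (by rwa [norm_sub_rev] at this)

variable [CompleteSpace C]

theorem tendsto_ghphi0 (hq : 2 ≤ q) (hπ₀ : 0 < ‖π‖) (hπ₁ : ‖π‖ ≤ 1) {u : C} (hu : ‖u‖ < 1) :
    Tendsto (fun k ↦ π ^ k * ghm π q (2 * k) u) atTop (𝓝 (ghphi0 π q u)) :=
  (cauchySeq_pi_pow_mul_ghm hq hπ₀ hπ₁ hu 0).tendsto_limUnder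

theorem tendsto_ghphi1 (hq : 2 ≤ q) (hπ₀ : 0 < ‖π‖) (hπ₁ : ‖π‖ ≤ 1) {u : C} (hu : ‖u‖ < 1) :
    Tendsto (fun k ↦ π ^ (k + 1) * ghm π q (2 * k + 1) u) atTop (𝓝 (ghphi1 π q u)) :=
  (cauchySeq_pi_pow_mul_ghm hq hπ₀ hπ₁ hu 1).tendsto_limUnder

theorem norm_ghphi0 (hq : 2 ≤ q) (hπ₀ : 0 < ‖π‖) (hπ₁ : ‖π‖ ≤ 1) {u : C} (hu₀ : 0 < ‖u‖)
    (hu₁ : ‖u‖ < 1) {s k : ℕ} (hsk : s + 1 = 2 * k) (h₁ : ‖π‖ < ‖u‖ ^ (q ^ s + q ^ (s - 1)))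
    (h₂ : ‖u‖ ^ (q ^ (s + 2) + q ^ (s + 1)) < ‖π‖) :
    ‖ghphi0 π q u‖ = ‖u‖ ^ (∑ i ∈ range (s + 1), q ^ i) / ‖π‖ ^ k := by
  refine tendsto_nhds_unique (tendsto_ghphi0 hq hπ₀ hπ₁ hu₁).norm
    (tendsto_const_nhds.congr' ?_)
  filter_upwards [eventually_ge_atTop k] with n hn
  obtain ⟨i, rfl⟩ := Nat.exists_eq_add_of_le hn
  rw [norm_mul, norm_pow, show 2 * (k + i) = s + 1 + 2 * i by omega,
    (norm_ghm_of_succ_le hπ₀ hq hu₀ hu₁ h₁ h₂ i).1, hsk]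
  field_simp
  ring

theorem norm_ghphi_wronskian (hchoose : ∀ i, 0 < i → i < q → ‖(q.choose i : C)‖ ≤ ‖π‖)
    (hq : 2 ≤ q) (hπ₀ : 0 < ‖π‖) (hπ₁ : ‖π‖ ≤ 1) {v w : C} (hw : ‖w‖ = ‖v‖) (hv₀ : 0 < ‖v‖)
    (hv₁ : ‖v‖ < 1) {s : ℕ} (hs : 1 ≤ s) (h₁ : ‖π‖ < ‖v‖ ^ (q ^ s + q ^ (s - 1)))
    (h₂ : ‖v‖ ^ (q ^ (s + 2) + q ^ (s + 1)) < ‖π‖) (hδ : ‖v - w‖ ^ (q - 1) * ‖v‖ ^ 2 < ‖π‖) :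
    ‖ghphi1 π q v * ghphi0 π q w - ghphi0 π q v * ghphi1 π q w‖ = ‖v - w‖ := by
  rcases eq_or_ne v w with rfl | hvw
  · simp [mul_comm]
  have hw₁ : ‖w‖ < 1 := hw ▸ hv₁
  have hlim : Tendsto (fun k ↦ π ^ (2 * k + 1) * ghWronskian π q (2 * k) v w) atTop
      (𝓝 (ghphi1 π q v * ghphi0 π q w - ghphi0 π q v * ghphi1 π q w)) := by
    refine (((tendsto_ghphi1 hq hπ₀ hπ₁ hv₁).mul (tendsto_ghphi0 hq hπ₀ hπ₁ hw₁)).sub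
      ((tendsto_ghphi0 hq hπ₀ hπ₁ hv₁).mul (tendsto_ghphi1 hq hπ₀ hπ₁ hw₁))).congr fun k ↦ ?_
    simp only [ghWronskian, pow_succ, pow_mul]
    ring
  refine tendsto_nhds_unique hlim.norm (tendsto_const_nhds.congr fun k ↦ ?_)
  exact (norm_pi_pow_mul_ghWronskian (norm_pos_iff.mp hπ₀)
    (fun _ hj ↦ norm_ghWronskian_increment_lt hchoose hq hπ₀ hπ₁ hw hv₀ hv₁ hs h₁ h₂ hδ hvw hj)
    _).symm

theorem ghphi0_ne_zero (hq : 2 ≤ q) (hπ₀ : 0 < ‖π‖) (hπ₁ : ‖π‖ ≤ 1) {u : C} (hu₀ : 0 < ‖u‖)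
    (hu₁ : ‖u‖ < 1) {s k : ℕ} (hsk : s + 1 = 2 * k) (h₁ : ‖π‖ < ‖u‖ ^ (q ^ s + q ^ (s - 1)))
    (h₂ : ‖u‖ ^ (q ^ (s + 2) + q ^ (s + 1)) < ‖π‖) : ghphi0 π q u ≠ 0 :=
  norm_pos_iff.mp (by rw [norm_ghphi0 hq hπ₀ hπ₁ hu₀ hu₁ hsk h₁ h₂]; positivity)

theorem norm_ghphi_div_sub_ghphi_div
    (hchoose : ∀ i, 0 < i → i < q → ‖(q.choose i : C)‖ ≤ ‖π‖) (hq : 2 ≤ q) (hπ₀ : 0 < ‖π‖)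
    (hπ₁ : ‖π‖ ≤ 1) {v w : C} (hw : ‖w‖ = ‖v‖) (hv₀ : 0 < ‖v‖) (hv₁ : ‖v‖ < 1) {s k : ℕ}
    (hs : 1 ≤ s) (hsk : s + 1 = 2 * k) (h₁ : ‖π‖ < ‖v‖ ^ (q ^ s + q ^ (s - 1)))
    (h₂ : ‖v‖ ^ (q ^ (s + 2) + q ^ (s + 1)) < ‖π‖) (hδ : ‖v - w‖ ^ (q - 1) * ‖v‖ ^ 2 < ‖π‖) :
    ‖ghphi1 π q w / ghphi0 π q w - ghphi1 π q v / ghphi0 π q v‖ =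
      ‖π‖ ^ (s + 1) * ‖w - v‖ / (‖v‖ ^ ∑ i ∈ range (s + 1), q ^ i) ^ 2 := by
  have hnum : ‖ghphi1 π q w * ghphi0 π q v - ghphi0 π q w * ghphi1 π q v‖ = ‖w - v‖ := by
    rw [norm_sub_rev w, ← norm_ghphi_wronskian hchoose hq hπ₀ hπ₁ hw hv₀ hv₁ hs h₁ h₂ hδ,
      ← norm_neg]
    ring_nf
  rw [div_sub_div _ _ (ghphi0_ne_zero hq hπ₀ hπ₁ (hw ▸ hv₀) (hw ▸ hv₁) hsk (hw ▸ h₁) (hw ▸ h₂))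
    (ghphi0_ne_zero hq hπ₀ hπ₁ hv₀ hv₁ hsk h₁ h₂), norm_div, norm_mul, hnum,
    norm_ghphi0 hq hπ₀ hπ₁ (hw ▸ hv₀) (hw ▸ hv₁) hsk (hw ▸ h₁) (hw ▸ h₂),
    norm_ghphi0 hq hπ₀ hπ₁ hv₀ hv₁ hsk h₁ h₂, hw, hsk]
  field_simp
  ring

end Ultrametric

theorem norm_natCast_choose_prime_pow_le {p : ℕ} [Fact p.Prime] {C : Type*} [NormedField C]
    [Algebra ℚ_[p] C] (hiso : ∀ x : ℚ_[p], ‖algebraMap ℚ_[p] C x‖ = ‖x‖)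
    (K : IntermediateField ℚ_[p] C) {π : C} (hπunif : ∀ x ∈ K, ‖x‖ < 1 → ‖x‖ ≤ ‖π‖)
    {e i : ℕ} (hi₀ : 0 < i) (hi : i < p ^ e) : ‖((p ^ e).choose i : C)‖ ≤ ‖π‖ := by
  refine hπunif _ (IntermediateField.natCast_mem K _) ?_
  rw [← map_natCast (algebraMap ℚ_[p] C), hiso, Padic.norm_natCast_lt_one_iff]
  exact (Fact.out : p.Prime).dvd_choose_pow hi₀.ne' hi.ne

theorem lt_pow_of_rpow_one_div_lt {a γ : ℝ} {n : ℕ} (ha : 0 ≤ a) (hγ : 0 ≤ γ) (hn : 0 < n)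
    (h : a ^ ((1 : ℝ) / n) < γ) : a < γ ^ n := by
  rwa [one_div, Real.rpow_inv_lt_iff_of_pos ha hγ (by positivity), Real.rpow_natCast] at h

theorem pow_lt_of_lt_rpow_one_div {a γ : ℝ} {n : ℕ} (ha : 0 ≤ a) (hγ : 0 ≤ γ) (hn : 0 < n)
    (h : γ < a ^ ((1 : ℝ) / n)) : γ ^ n < a := by
  rwa [one_div, Real.lt_rpow_inv_iff_of_pos hγ ha (by positivity), Real.rpow_natCast] at h

theorem pow_mul_sq_lt_of_lt_rpow {a γ δ : ℝ} {q : ℕ} (hq : 2 ≤ q) (ha : 0 < a) (hγ : 0 < γ)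
    (hδ : 0 ≤ δ) (h : δ < (a * γ ^ (-(2 : ℝ))) ^ ((1 : ℝ) / ((q : ℝ) - 1))) :
    δ ^ (q - 1) * γ ^ 2 < a := by
  have hcast : ((q : ℝ) - 1) = ((q - 1 : ℕ) : ℝ) := by rw [Nat.cast_sub (by omega), Nat.cast_one]
  rw [hcast] at h
  have h' := pow_lt_of_lt_rpow_one_div (by positivity) hδ (by omega) h
  rw [Real.rpow_neg hγ.le, Real.rpow_two] at h'
  rwa [lt_mul_inv_iff₀ (by positivity)] at h'

theorem rpow_neg_two_mul_geom_sum {γ : ℝ} (hγ : 0 ≤ γ) (q n : ℕ) :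
    γ ^ (-(2 : ℝ) * ∑ i ∈ range n, (q : ℝ) ^ i) = ((γ ^ ∑ i ∈ range n, q ^ i) ^ 2)⁻¹ := by
  rw [← pow_mul', ← Real.rpow_natCast, ← Real.rpow_neg hγ]
  push_cast
  ring_nf

theorem period_map_image_derivative_general {p : ℕ} [Fact p.Prime] {C : Type*} [NormedField C] [IsUltrametricDist C]
    [CompleteSpace C] [Algebra ℚ_[p] C]
    (hiso : ∀ x : ℚ_[p], ‖algebraMap ℚ_[p] C x‖ = ‖x‖)
    (K : IntermediateField ℚ_[p] C)
    (q : ℕ) (hq : ∃ r : ℕ, 0 < r ∧ q = p ^ r)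
    (π : C) (hπ0 : 0 < ‖π‖) (hπ1 : ‖π‖ < 1)
    (hπunif : ∀ x ∈ K, ‖x‖ < 1 → ‖x‖ ≤ ‖π‖)
    (s : ℕ) (hs : Odd s)
    (γ : ℝ) (h1 : ‖π‖ ^ ((1:ℝ)/((q:ℝ)^s + (q:ℝ)^(s-1))) < γ)
    (h2 : γ < ‖π‖ ^ ((1:ℝ)/((q:ℝ)^(s+2) + (q:ℝ)^(s+1))))
    (u0 : C) (hu0 : ‖u0‖ = γ) :
    ∀ u : C, ‖u - u0‖ < (‖π‖ * γ ^ (-(2:ℝ))) ^ ((1:ℝ)/((q:ℝ)-1)) →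
      ghphi0 π q u ≠ 0 ∧ ghphi0 π q u0 ≠ 0 ∧
      ‖ghphi1 π q u / ghphi0 π q u - ghphi1 π q u0 / ghphi0 π q u0‖ =
        ‖π‖ ^ (s+1) * γ ^ (-(2:ℝ) * ∑ i ∈ Finset.range (s+1), (q:ℝ)^i) * ‖u - u0‖ := by
  intro u hu
  obtain ⟨e, he, hqe⟩ := hq
  obtain ⟨k, rfl⟩ := hs
  subst hu0
  have hq : 2 ≤ q := hqe ▸ (Nat.Prime.two_le Fact.out).trans (Nat.le_self_pow he.ne' p)
  have hchoose : ∀ i, 0 < i → i < q → ‖(q.choose i : C)‖ ≤ ‖π‖ := by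
    subst hqe
    exact fun i hi₀ hi ↦ norm_natCast_choose_prime_pow_le hiso K hπunif hi₀ hi
  have hu0₀ : 0 < ‖u0‖ := (Real.rpow_pos_of_pos hπ0 _).trans h1
  have hu0₁ : ‖u0‖ < 1 := h2.trans (Real.rpow_lt_one hπ0.le hπ1 (by positivity))
  have h₁ : ‖π‖ < ‖u0‖ ^ (q ^ (2 * k + 1) + q ^ (2 * k + 1 - 1)) :=
    lt_pow_of_rpow_one_div_lt hπ0.le hu0₀.le (by positivity) (by exact_mod_cast h1)
  have h₂ : ‖u0‖ ^ (q ^ (2 * k + 1 + 2) + q ^ (2 * k + 1 + 1)) < ‖π‖ :=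
    pow_lt_of_lt_rpow_one_div hπ0.le hu0₀.le (by positivity) (by exact_mod_cast h2)
  have hδ : ‖u0 - u‖ ^ (q - 1) * ‖u0‖ ^ 2 < ‖π‖ :=
    norm_sub_rev u u0 ▸ pow_mul_sq_lt_of_lt_rpow hq hπ0 hu0₀ (norm_nonneg _) hu
  have hu : ‖u‖ = ‖u0‖ := norm_eq_of_norm_sub_pow_mul_sq_lt (by omega) (by omega) hu0₁.le h₁ hδ
  have hsk : 2 * k + 1 + 1 = 2 * (k + 1) := by ring
  refine ⟨ghphi0_ne_zero hq hπ0 hπ1.le (hu ▸ hu0₀) (hu ▸ hu0₁) hsk (hu ▸ h₁) (hu ▸ h₂),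
    ghphi0_ne_zero hq hπ0 hπ1.le hu0₀ hu0₁ hsk h₁ h₂, ?_⟩
  rw [norm_ghphi_div_sub_ghphi_div hchoose hq hπ0 hπ1.le hu hu0₀ hu0₁ (by omega) hsk h₁ h₂ hδ,
    rpow_neg_two_mul_geom_sum hu0₀.le]
  ring

theorem period_map_image_derivative {p : ℕ} [Fact p.Prime] {C : Type*} [NormedField C] [IsUltrametricDist C]
    [CompleteSpace C] [IsAlgClosed C] [Algebra ℚ_[p] C]
    (hiso : ∀ x : ℚ_[p], ‖algebraMap ℚ_[p] C x‖ = ‖x‖)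
    (K : IntermediateField ℚ_[p] C) (hKfin : FiniteDimensional ℚ_[p] K)
    (q : ℕ) (hq : ∃ r : ℕ, 0 < r ∧ q = p ^ r)
    (π : C) (hπK : π ∈ K) (hπ0 : 0 < ‖π‖) (hπ1 : ‖π‖ < 1)
    (hπunif : ∀ x ∈ K, ‖x‖ < 1 → ‖x‖ ≤ ‖π‖)
    (hres : ∃ S : Finset C, S.card = q ∧ (∀ s ∈ S, s ∈ K ∧ ‖s‖ ≤ 1) ∧
      (∀ x ∈ K, ‖x‖ ≤ 1 → ∃ s ∈ S, ‖x - s‖ < 1) ∧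
      (∀ s ∈ S, ∀ t ∈ S, s ≠ t → ‖s - t‖ = 1))
    (s : ℕ) (hs : Odd s) (hs1 : 1 ≤ s)
    (γ : ℝ) (h1 : ‖π‖ ^ ((1:ℝ)/((q:ℝ)^s + (q:ℝ)^(s-1))) < γ)
    (h2 : γ < ‖π‖ ^ ((1:ℝ)/((q:ℝ)^(s+2) + (q:ℝ)^(s+1))))
    (u0 : C) (hu0 : ‖u0‖ = γ) :
    ∀ u : C, ‖u - u0‖ < (‖π‖ * γ ^ (-(2:ℝ))) ^ ((1:ℝ)/((q:ℝ)-1)) →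
      ghphi0 π q u ≠ 0 ∧ ghphi0 π q u0 ≠ 0 ∧
      ‖ghphi1 π q u / ghphi0 π q u - ghphi1 π q u0 / ghphi0 π q u0‖ =
        ‖π‖ ^ (s+1) * γ ^ (-(2:ℝ) * ∑ i ∈ Finset.range (s+1), (q:ℝ)^i) * ‖u - u0‖ :=
  period_map_image_derivative_general hiso K q hq π hπ0 hπ1 hπunif s hs γ h1 h2 u0 hu0
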